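/- arXiv:1912.12427 — 7 statements merged into one kernel-verified Lean document; each statement's English description precedes it below -/
import Mathlib

section
/- Consider the function J(P) = (P+1)/(2λ) + w·σ²_ob + w(σ²_θ − σ²_ob)σ²_ch/(σ²_ch + P) on the domain P ≥ 1, with parameters λ ∈ (0,1), w > 0, σ²_θ > σ²_ob ≥ 0, σ²_ch > 0. If w ≤ w₀ := (1+σ²_ch)²/(2λ σ²_θ σ²_ch), then J is nondecreasing on [1, ∞) and its minimum is attained at P = 1. -/
/-- For
`J(P) = (P+1)/(2λ) + w σob + w (σθ − σob) σch/(σch + P)` on `P ≥ 1`, if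
`w ≤ w₀ = (1+σch)²/(2λ σθ σch)`, then `J` is nondecreasing on `[1, ∞)` and its minimum
is attained at `P = 1`. -/
theorem fixed_power_min_at_one
    (lam w σθ σob σch : ℝ)
    (hl0 : 0 < lam) (hl1 : lam < 1) (hw : 0 < w)
    (hob : 0 ≤ σob) (hθob : σob < σθ) (hch : 0 < σch)
    (hw0 : w ≤ (1 + σch) ^ 2 / (2 * lam * σθ * σch)) :
    MonotoneOn
      (fun P : ℝ => (P + 1) / (2 * lam) + w * σob + w * (σθ - σob) * σch / (σch + P))
      (Set.Ici 1) ∧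
    ∀ P : ℝ, 1 ≤ P →
      (1 + 1) / (2 * lam) + w * σob + w * (σθ - σob) * σch / (σch + 1)
        ≤ (P + 1) / (2 * lam) + w * σob + w * (σθ - σob) * σch / (σch + P) := by
  have key : ∀ a b : ℝ, 1 ≤ a → 1 ≤ b → a ≤ b →
      (a + 1) / (2 * lam) + w * σob + w * (σθ - σob) * σch / (σch + a)
        ≤ (b + 1) / (2 * lam) + w * σob + w * (σθ - σob) * σch / (σch + b) := by
    intro a b ha hb hab
    have ha0 : 0 < σch + a := by linarith
    have hb0 : 0 < σch + b := by linarith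
    have hθ : 0 < σθ := lt_of_le_of_lt hob hθob
    have hden : 0 < 2 * lam * σθ * σch := by positivity
    have hw0' : w * (2 * lam * σθ * σch) ≤ (1 + σch) ^ 2 := by
      rw [div_eq_mul_inv] at hw0
      calc w * (2 * lam * σθ * σch) ≤ (1 + σch) ^ 2 * (2 * lam * σθ * σch)⁻¹ * (2 * lam * σθ * σch) := by
            exact mul_le_mul_of_nonneg_right hw0 (le_of_lt hden)
        _ = (1 + σch) ^ 2 := by field_simp
    have hK : (0:ℝ) ≤ σθ - σob := by linarith
    have h1 : w * (σθ - σob) * σch / (σch + a) - w * (σθ - σob) * σch / (σch + b)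
        ≤ (b - a) / (2 * lam) := by
      rw [div_sub_div _ _ (ne_of_gt ha0) (ne_of_gt hb0), div_le_div_iff₀ (by positivity) (by positivity)]
      have hfac : (1 + σch)^2 ≤ (σch + a) * (σch + b) := by nlinarith
      have h3 : 2 * lam * w * (σθ - σob) * σch ≤ (σch + a) * (σch + b) := by
        nlinarith [mul_pos (mul_pos hl0 hw) hch, mul_nonneg (mul_nonneg (mul_nonneg hl0.le hw.le) hob) hch.le]
      nlinarith [mul_le_mul_of_nonneg_left h3 (sub_nonneg.mpr hab)]
    have h2 : (a + 1) / (2 * lam) + (b - a) / (2 * lam) = (b + 1) / (2 * lam) := by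
      field_simp; ring
    linarith
  constructor
  · intro a ha b hb hab
    exact key a b ha hb hab
  · intro P hP
    exact key 1 P le_rfl hP hP
end

section
/- Consider J(P) = (P+1)/(2λ) + w·σ²_ob + w(σ²_θ − σ²_ob)σ²_ch/(σ²_ch + P) on P ≥ 1 with λ ∈ (0,1), w > 0, 0 ≤ σ²_ob < σ²_θ, σ²_ch > 0. If w > w₀ := (1+σ²_ch)²/(2λ σ²_θ σ²_ch) and σ²_ob < σ²_θ(1 − w₀/w), then the unique minimizer of J over [1,∞) is P* = sqrt(2λ w (σ²_θ − σ²_ob) σ²_ch) − σ²_ch, and P* ≥ 1. -/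
/-- For
`J(P) = (P+1)/(2λ) + w σob + w (σθ − σob) σch/(σch + P)` on `P ≥ 1`, if
`w > w₀ = (1+σch)²/(2λ σθ σch)` and `σob < σθ (1 − w₀/w)`, then the unique minimizer
of `J` over `[1,∞)` is `P* = √(2λ w (σθ − σob) σch) − σch`, and `P* ≥ 1`. -/
theorem fixed_power_optimal_power
    (lam w σθ σob σch : ℝ)
    (hl0 : 0 < lam) (hl1 : lam < 1) (hw : 0 < w)
    (hob : 0 ≤ σob) (hθob : σob < σθ) (hch : 0 < σch)
    (hw0 : (1 + σch) ^ 2 / (2 * lam * σθ * σch) < w)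
    (hob0 : σob < σθ * (1 - ((1 + σch) ^ 2 / (2 * lam * σθ * σch)) / w)) :
    let J : ℝ → ℝ :=
      fun P => (P + 1) / (2 * lam) + w * σob + w * (σθ - σob) * σch / (σch + P)
    let Pstar : ℝ := Real.sqrt (2 * lam * w * (σθ - σob) * σch) - σch
    1 ≤ Pstar ∧ (∀ P : ℝ, 1 ≤ P → J Pstar ≤ J P) ∧
      (∀ P : ℝ, 1 ≤ P → J P = J Pstar → P = Pstar) := by
  intro J Pstar
  have hθ : 0 < σθ := lt_of_le_of_lt hob hθob
  have hA : 0 < 2 * lam * w * (σθ - σob) * σch := by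
    have : 0 < σθ - σob := by linarith
    positivity
  -- key squared inequality
  have hkey : (1 + σch) ^ 2 < 2 * lam * w * (σθ - σob) * σch := by
    have h1 : σθ * (1 - ((1 + σch) ^ 2 / (2 * lam * σθ * σch)) / w)
        = σθ - (1 + σch) ^ 2 / (2 * lam * σch * w) := by
      field_simp
    rw [h1] at hob0
    have h2 : (1 + σch) ^ 2 / (2 * lam * σch * w) < σθ - σob := by linarith
    have h3 : 0 < 2 * lam * σch * w := by positivity
    rw [div_lt_iff₀ h3] at h2
    nlinarith [h2]
  set s := Real.sqrt (2 * lam * w * (σθ - σob) * σch) with hs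
  have hs2 : s ^ 2 = 2 * lam * w * (σθ - σob) * σch := Real.sq_sqrt hA.le
  have h1s : 1 + σch < s := by
    rw [hs]
    rw [show (1 + σch : ℝ) = Real.sqrt ((1 + σch) ^ 2) by
      rw [Real.sqrt_sq (by positivity)]]
    exact Real.sqrt_lt_sqrt (by positivity) hkey
  have hPstar1 : 1 ≤ Pstar := by
    simp only [Pstar, ← hs]; linarith
  have hsPs : σch + Pstar = s := by simp only [Pstar, ← hs]; ring
  have hspos : 0 < s := by linarith
  -- main identity
  have hid : ∀ P : ℝ, 1 ≤ P →
      J P = J Pstar + (P - Pstar) ^ 2 / (2 * lam * (σch + P)) := by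
    intro P hP
    have hxP : 0 < σch + P := by linarith
    have hC : w * (σθ - σob) * σch = s ^ 2 / (2 * lam) := by
      rw [hs2]; field_simp
    simp only [J]
    rw [hC, hsPs]
    have hPs : P - Pstar = (σch + P) - s := by
      simp only [Pstar, ← hs]; ring
    rw [hPs]
    field_simp
    ring
  clear_value s J Pstar
  refine ⟨hPstar1, ?_, ?_⟩
  · intro P hP
    have := hid P hP
    have hxP : 0 < σch + P := by linarith
    have : 0 ≤ (P - Pstar) ^ 2 / (2 * lam * (σch + P)) := by positivity
    linarith [hid P hP]
  · intro P hP hJ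
    have h := hid P hP
    have hxP : 0 < σch + P := by linarith
    have h0 : (P - Pstar) ^ 2 / (2 * lam * (σch + P)) = 0 := by linarith
    have hd : (2 * lam * (σch + P)) ≠ 0 := by positivity
    rw [div_eq_zero_iff] at h0
    have : (P - Pstar) ^ 2 = 0 := by
      rcases h0 with h0 | h0
      · exact h0
      · exact absurd h0 hd
    have := pow_eq_zero_iff (n := 2) (by norm_num) |>.mp this
    linarith
end

section
/- For the save-and-transmit objective J_sv(P) = (P+λ)/(2λ) + w·σ²_ob + w(σ²_θ − σ²_ob)σ²_ch/(σ²_ch + P) minimized over P ≥ λ, if w > w₀' := (λ+σ²_ch)²/(2λ σ²_θ σ²_ch) and σ²_ob < σ²_θ(1 − w₀'/w), then the minimizer is P_sv = sqrt(2λ w (σ²_θ − σ²_ob) σ²_ch) − σ²_ch, and P_sv ≥ λ. -/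
/-- For the save-and-transmit objective
`J_sv(P) = (P+λ)/(2λ) + w σob + w (σθ − σob) σch/(σch + P)` minimized over `P ≥ λ`,
if `w > w₀' = (λ+σch)²/(2λ σθ σch)` and `σob < σθ (1 − w₀'/w)`, then the minimizer is
`P_sv = √(2λ w (σθ − σob) σch) − σch`, and `P_sv ≥ λ`. -/
theorem save_and_transmit_optimal_power
    (lam w σθ σob σch : ℝ)
    (hl0 : 0 < lam) (hl1 : lam < 1) (hw : 0 < w)
    (hob : 0 ≤ σob) (hθob : σob < σθ) (hch : 0 < σch)
    (hw0 : (lam + σch) ^ 2 / (2 * lam * σθ * σch) < w)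
    (hob0 : σob < σθ * (1 - ((lam + σch) ^ 2 / (2 * lam * σθ * σch)) / w)) :
    let J : ℝ → ℝ :=
      fun P => (P + lam) / (2 * lam) + w * σob + w * (σθ - σob) * σch / (σch + P)
    let Psv : ℝ := Real.sqrt (2 * lam * w * (σθ - σob) * σch) - σch
    lam ≤ Psv ∧ ∀ P : ℝ, lam ≤ P → J Psv ≤ J P := by
  intro J Psv
  have hθ : 0 < σθ := lt_of_le_of_lt hob hθob
  have hd : (0:ℝ) < σθ - σob := by linarith
  have hc : 0 ≤ 2 * lam * w * (σθ - σob) * σch :=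
    le_of_lt (mul_pos (mul_pos (by positivity) hd) hch)
  set s : ℝ := Real.sqrt (2 * lam * w * (σθ - σob) * σch) with hsdef
  have hs2 : s ^ 2 = 2 * lam * w * (σθ - σob) * σch := Real.sq_sqrt hc
  have hkey : (lam + σch) ^ 2 < 2 * lam * w * (σθ - σob) * σch := by
    have h1 : σθ * (((lam + σch) ^ 2 / (2 * lam * σθ * σch)) / w)
        = (lam + σch) ^ 2 / (2 * lam * σch * w) := by
      field_simp
    have h2 : σθ - σob > (lam + σch) ^ 2 / (2 * lam * σch * w) := by
      rw [← h1]; nlinarith [hob0]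
    have h3 : (lam + σch) ^ 2 / (2 * lam * σch * w) * (2 * lam * σch * w)
        = (lam + σch) ^ 2 := by field_simp
    nlinarith [mul_lt_mul_of_pos_right h2 (by positivity : (0:ℝ) < 2 * lam * σch * w)]
  have hslt : lam + σch < s := by
    rw [hsdef]
    exact (Real.lt_sqrt (by positivity)).mpr hkey
  have hs0 : 0 < s := by nlinarith
  constructor
  · show lam ≤ s - σch
    linarith
  · intro P hP
    have hx : 0 < σch + P := by linarith
    have hA : w * (σθ - σob) * σch = s ^ 2 / (2 * lam) := by
      rw [hs2]; field_simp
    show (s - σch + lam) / (2 * lam) + w * σob + w * (σθ - σob) * σch / (σch + (s - σch))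
        ≤ (P + lam) / (2 * lam) + w * σob + w * (σθ - σob) * σch / (σch + P)
    rw [hA]
    have hss : σch + (s - σch) = s := by ring
    rw [hss]
    rw [← sub_nonneg]
    have expand : (P + lam) / (2 * lam) + w * σob + s ^ 2 / (2 * lam) / (σch + P)
        - ((s - σch + lam) / (2 * lam) + w * σob + s ^ 2 / (2 * lam) / s)
        = (σch + P - s) ^ 2 / (2 * lam * (σch + P)) := by
      field_simp
      ring
    rw [expand]
    positivity
end

section
/- Stationarity of the Lagrangian for minimizing (1/K)·Σ_{l=1}^{L} Y_l/(σ²_ch + P_{l-1}) subject to cumulative energy constraints Σ_{i≤l} P_i ≤ e_l yields the water-filling form: any interior optimal power satisfies P_l = sqrt(Y_{l+1}/(K ν_l)) − σ²_ch, where ν_l = Σ_{j≥l} μ_j with μ_j ≥ 0 the Lagrange multipliers; equivalently ν_l = Y_{l+1}/(K (σ²_ch + P_l)²). -/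
/-- Stationarity of the Lagrangian for the offline objective
`(1/K) Σ_l Y_l/(σch + P_{l-1})` under cumulative energy constraints yields the
water-filling form: if the Lagrange multipliers `μ_j ≥ 0` define the water level
`ν_l = Σ_{j=l}^L μ_j`, and the stationarity condition
`−Y_{l+1}/(K (σch + P_l)²) + ν_l = 0` holds at an interior point with
`σch + P_l > 0`, then `P_l = √(Y_{l+1}/(K ν_l)) − σch`, and equivalently
`ν_l = Y_{l+1}/(K (σch + P_l)²)`. -/
theorem offline_water_filling
    (L : ℕ) (K σch : ℝ) (μ : ℕ → ℝ) (P Y : ℕ → ℝ) (l : ℕ)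
    (hK : 0 < K) (hch : 0 < σch)
    (hμ : ∀ j, 0 ≤ μ j) (hY : 0 < Y (l + 1)) (hl : l ≤ L)
    (hPpos : 0 < σch + P l)
    (hstat : -(Y (l + 1)) / (K * (σch + P l) ^ 2) + (∑ j ∈ Finset.Icc l L, μ j) = 0) :
    P l = Real.sqrt (Y (l + 1) / (K * ∑ j ∈ Finset.Icc l L, μ j)) - σch ∧
    (∑ j ∈ Finset.Icc l L, μ j) = Y (l + 1) / (K * (σch + P l) ^ 2) := by
  set ν := ∑ j ∈ Finset.Icc l L, μ j with hν
  have hden : K * (σch + P l) ^ 2 > 0 := by positivity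
  have h2 : ν = Y (l + 1) / (K * (σch + P l) ^ 2) := by
    have := hstat
    field_simp at this ⊢
    linarith
  refine ⟨?_, h2⟩
  have hsq : Y (l + 1) / (K * ν) = (σch + P l) ^ 2 := by
    rw [h2]
    field_simp
  rw [hsq, Real.sqrt_sq hPpos.le]
  ring
end

section
/- In the AoI-distortion MDP, the α-optimal value function V_α(δ, d, b) is non-increasing in the energy state b: if b₁ < b₂ then V_α(δ, d, b₁) ≥ V_α(δ, d, b₂). -/
/-- Distortion after transmitting with power `p > 0`:
`D(p) = σob + (σθ − σob) σch/(σch + p)`. -/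
noncomputable def distortion (σθ σob σch : ℝ) (p : ℕ) : ℝ :=
  σob + (σθ - σob) * σch / (σch + (p : ℝ))

/-- The state-action value: immediate cost plus discounted expected future cost.
State `(δ, d, b)` (AoI, distortion, energy), action `p ∈ {0,…,b}`.  One unit of energy
is harvested with probability `λ`.  If `p = 0` the cost is `δ+1+w d`, the age
increments (capped at `δmax`) and the distortion persists; if `p > 0` the cost is
`1 + w D(p)`, the age resets to 1, the distortion becomes `D(p)` and the energy
decreases by `p` (harvesting capped at `bmax`). -/
noncomputable def Qval (α lam w σθ σob σch : ℝ) (δmax bmax : ℕ)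
    (V : ℕ → ℝ → ℕ → ℝ) (δ : ℕ) (d : ℝ) (b : ℕ) (p : ℕ) : ℝ :=
  if p = 0 then
    ((δ : ℝ) + 1 + w * d)
      + α * (lam * V (min (δ + 1) δmax) d (min (b + 1) bmax)
          + (1 - lam) * V (min (δ + 1) δmax) d b)
  else
    (1 + w * distortion σθ σob σch p)
      + α * (lam * V 1 (distortion σθ σob σch p) (min (b - p + 1) bmax)
          + (1 - lam) * V 1 (distortion σθ σob σch p) (b - p))

/-- `V` is a fixed point of the Bellman optimality operator:
`V(s) = min_{0 ≤ p ≤ b} Q(s, p)`. -/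
def IsBellmanFixedPoint (α lam w σθ σob σch : ℝ) (δmax bmax : ℕ)
    (V : ℕ → ℝ → ℕ → ℝ) : Prop :=
  ∀ δ : ℕ, ∀ d : ℝ, ∀ b : ℕ,
    V δ d b = (Finset.range (b + 1)).inf'
      (Finset.nonempty_range_iff.mpr (Nat.succ_ne_zero b))
      (Qval α lam w σθ σob σch δmax bmax V δ d b)

/-- In the AoI-distortion MDP, the α-optimal value function
`V_α(δ, d, b)` is non-increasing in the energy state `b`. -/
theorem value_nonincreasing_in_energy
    (α lam w σθ σob σch : ℝ) (δmax bmax : ℕ) (V : ℕ → ℝ → ℕ → ℝ)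
    (hα0 : 0 < α) (hα1 : α < 1) (hl0 : 0 < lam) (hl1 : lam < 1) (hw : 0 < w)
    (hob : 0 ≤ σob) (hθob : σob < σθ) (hch : 0 < σch)
    (hδmax : 1 ≤ δmax)
    (hV : IsBellmanFixedPoint α lam w σθ σob σch δmax bmax V) :
    ∀ δ : ℕ, ∀ d : ℝ, ∀ b₁ b₂ : ℕ,
      1 ≤ δ → δ ≤ δmax → b₂ ≤ bmax → b₁ < b₂ → V δ d b₂ ≤ V δ d b₁ := by
  intro δ d b₁ b₂ hδ1 hδm hb2max hb12
  classical
  set Dset : Finset ℝ :=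
    insert d ((Finset.Icc 1 bmax).image (fun p => distortion σθ σob σch p)) with hDset
  set F : Finset (ℕ × ℝ × ℕ × ℕ) :=
    (Finset.Icc 1 δmax) ×ˢ Dset ×ˢ
      ((Finset.range (bmax+1) ×ˢ Finset.range (bmax+1)).filter fun q => q.1 < q.2) with hF
  have hmemF : ∀ a : ℕ, ∀ e : ℝ, ∀ c₁ c₂ : ℕ, 1 ≤ a → a ≤ δmax → e ∈ Dset →
      c₁ < c₂ → c₂ ≤ bmax → (a, e, c₁, c₂) ∈ F := by
    intro a e c₁ c₂ h1 h2 h3 h4 h5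
    simp only [hF, Finset.mem_product, Finset.mem_filter, Finset.mem_Icc, Finset.mem_range]
    exact ⟨⟨h1, h2⟩, h3, ⟨lt_of_lt_of_le (Nat.lt_succ_of_lt h4) (by omega),
      Nat.lt_succ_of_le h5⟩, h4⟩
  have hdD : d ∈ Dset := Finset.mem_insert_self d _
  have hFne : F.Nonempty := ⟨(δ, d, b₁, b₂), hmemF δ d b₁ b₂ hδ1 hδm hdD hb12 hb2max⟩
  set g : ℕ × ℝ × ℕ × ℕ → ℝ := fun x => V x.1 x.2.1 x.2.2.2 - V x.1 x.2.1 x.2.2.1 with hg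
  set S : ℝ := F.sup' hFne g with hS
  set M : ℝ := max S 0 with hM
  have hM0 : 0 ≤ M := le_max_right _ _
  -- any monotone pair difference bounded by M
  have pair_le : ∀ (a : ℕ) (e : ℝ) (c₁ c₂ : ℕ), 1 ≤ a → a ≤ δmax → e ∈ Dset →
      c₁ ≤ c₂ → c₂ ≤ bmax → V a e c₂ - V a e c₁ ≤ M := by
    intro a e c₁ c₂ h1 h2 h3 h4 h5
    rcases eq_or_lt_of_le h4 with rfl | hlt
    · simpa using hM0
    · exact le_trans (Finset.le_sup' g (hmemF a e c₁ c₂ h1 h2 h3 hlt h5))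
        (le_max_left _ _)
  -- key contraction step
  have key : ∀ x ∈ F, g x ≤ α * M := by
    intro x hx
    obtain ⟨a, e, c₁, c₂⟩ := x
    simp only [hF, Finset.mem_product, Finset.mem_filter, Finset.mem_Icc,
      Finset.mem_range] at hx
    obtain ⟨⟨ha1, ha2⟩, he, ⟨hc1, hc2⟩, hcc⟩ := hx
    have hc2max : c₂ ≤ bmax := Nat.lt_succ_iff.mp hc2
    -- optimal action at c₁
    obtain ⟨p, hp, hpeq⟩ := Finset.exists_mem_eq_inf'
      (Finset.nonempty_range_iff.mpr (Nat.succ_ne_zero c₁))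
      (Qval α lam w σθ σob σch δmax bmax V a e c₁)
    have hpc1 : p ≤ c₁ := Nat.lt_succ_iff.mp (Finset.mem_range.mp hp)
    have h1 : V a e c₁ = Qval α lam w σθ σob σch δmax bmax V a e c₁ p := by
      rw [hV a e c₁]; exact hpeq
    have h2 : V a e c₂ ≤ Qval α lam w σθ σob σch δmax bmax V a e c₂ p := by
      rw [hV a e c₂]
      exact Finset.inf'_le _ (Finset.mem_range.mpr (by omega))
    have hαl : (0:ℝ) ≤ α * lam := by positivity
    have hαl' : (0:ℝ) ≤ α * (1 - lam) := by nlinarith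
    have hstep : Qval α lam w σθ σob σch δmax bmax V a e c₂ p -
        Qval α lam w σθ σob σch δmax bmax V a e c₁ p ≤ α * M := by
      by_cases hp0 : p = 0
      · subst hp0
        simp only [Qval, if_pos rfl, if_true]
        have hA : V (min (a+1) δmax) e (min (c₂+1) bmax) -
            V (min (a+1) δmax) e (min (c₁+1) bmax) ≤ M :=
          pair_le _ _ _ _ (by omega) (by omega) he (by omega) (by omega)
        have hB : V (min (a+1) δmax) e c₂ - V (min (a+1) δmax) e c₁ ≤ M :=
          pair_le _ _ _ _ (by omega) (by omega) he hcc.le hc2max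
        nlinarith [mul_le_mul_of_nonneg_left hA hαl,
          mul_le_mul_of_nonneg_left hB hαl']
      · simp only [Qval, if_neg hp0]
        have heD : distortion σθ σob σch p ∈ Dset := by
          refine Finset.mem_insert_of_mem (Finset.mem_image.mpr ⟨p, ?_, rfl⟩)
          exact Finset.mem_Icc.mpr ⟨by omega, by omega⟩
        have hA : V 1 (distortion σθ σob σch p) (min (c₂-p+1) bmax) -
            V 1 (distortion σθ σob σch p) (min (c₁-p+1) bmax) ≤ M :=
          pair_le _ _ _ _ le_rfl hδmax heD (by omega) (by omega)
        have hB : V 1 (distortion σθ σob σch p) (c₂-p) -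
            V 1 (distortion σθ σob σch p) (c₁-p) ≤ M :=
          pair_le _ _ _ _ le_rfl hδmax heD (by omega) (by omega)
        nlinarith [mul_le_mul_of_nonneg_left hA hαl,
          mul_le_mul_of_nonneg_left hB hαl']
    calc g (a, e, c₁, c₂) = V a e c₂ - V a e c₁ := rfl
      _ ≤ Qval α lam w σθ σob σch δmax bmax V a e c₂ p -
          Qval α lam w σθ σob σch δmax bmax V a e c₁ p := by rw [h1]; linarith
      _ ≤ α * M := hstep
  have hSle : S ≤ α * M := Finset.sup'_le hFne g key
  have hS0 : S ≤ 0 := by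
    by_contra h
    push_neg at h
    have : M = S := max_eq_left h.le
    rw [this] at hSle
    nlinarith
  have := Finset.le_sup' g (hmemF δ d b₁ b₂ hδ1 hδm hdD hb12 hb2max)
  have : g (δ, d, b₁, b₂) ≤ S := this
  simp only [hg] at this
  linarith
end

section
/- In the AoI-distortion MDP, the α-optimal value function V_α(δ, d, b) is non-decreasing in the AoI δ and non-decreasing in the distortion d. -/
set_option maxHeartbeats 1000000 in
/-- In the AoI-distortion MDP, the α-optimal value function
`V_α(δ, d, b)` is non-decreasing in the AoI `δ` and non-decreasing in the
distortion `d`. -/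
theorem value_monotone_in_aoi_and_distortion
    (α lam w σθ σob σch : ℝ) (δmax bmax : ℕ) (V : ℕ → ℝ → ℕ → ℝ)
    (hα0 : 0 < α) (hα1 : α < 1) (hl0 : 0 < lam) (hl1 : lam < 1) (hw : 0 < w)
    (hob : 0 ≤ σob) (hθob : σob < σθ) (hch : 0 < σch)
    (hδmax : 1 ≤ δmax)
    (hV : IsBellmanFixedPoint α lam w σθ σob σch δmax bmax V) :
    (∀ δ₁ δ₂ : ℕ, ∀ d : ℝ, ∀ b : ℕ,
       1 ≤ δ₁ → δ₁ ≤ δ₂ → δ₂ ≤ δmax → b ≤ bmax → V δ₁ d b ≤ V δ₂ d b) ∧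
    (∀ δ : ℕ, ∀ d₁ d₂ : ℝ, ∀ b : ℕ,
       1 ≤ δ → δ ≤ δmax → b ≤ bmax → d₁ ≤ d₂ → V δ d₁ b ≤ V δ d₂ b) := by
  -- V is below every Q-value
  have hle : ∀ δ d b p, p ≤ b →
      V δ d b ≤ Qval α lam w σθ σob σch δmax bmax V δ d b p := by
    intro δ d b p hp
    rw [hV δ d b]
    exact Finset.inf'_le _ (Finset.mem_range.mpr (Nat.lt_succ_of_le hp))
  -- the minimum is attained
  have hmin : ∀ δ d b, ∃ p, p ≤ b ∧
      V δ d b = Qval α lam w σθ σob σch δmax bmax V δ d b p := by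
    intro δ d b
    obtain ⟨p, hp, he⟩ := Finset.exists_mem_eq_inf'
      (Finset.nonempty_range_iff.mpr (Nat.succ_ne_zero b))
      (Qval α lam w σθ σob σch δmax bmax V δ d b)
    exact ⟨p, Nat.lt_succ_iff.mp (Finset.mem_range.mp hp), by rw [hV δ d b]; exact he⟩
  have h1l : (0:ℝ) ≤ 1 - lam := by linarith
  constructor
  · -- monotone in δ
    intro δ₁ δ₂ d b h1 h12 h2max hb
    classical
    set T : Finset (ℕ × ℕ × ℕ) :=
      Finset.Icc 1 δmax ×ˢ Finset.Icc 1 δmax ×ˢ Finset.range (bmax + 1) with hT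
    have hTne : T.Nonempty := ⟨(1, 1, 0), by simp [hT, hδmax]⟩
    set g : ℕ × ℕ × ℕ → ℝ :=
      fun s => if s.1 ≤ s.2.1 then V s.1 d s.2.2 - V s.2.1 d s.2.2 else 0 with hg
    set M := T.sup' hTne g with hM
    have hK0 : (0:ℝ) ≤ max M 0 := le_max_right _ _
    have hMle : M ≤ max M 0 := le_max_left _ _
    have hkey : ∀ s ∈ T, g s ≤ α * max M 0 := by
      rintro ⟨a, c, e⟩ hs
      simp only [hT, Finset.mem_product, Finset.mem_Icc, Finset.mem_range] at hs
      obtain ⟨⟨ha1, haM⟩, ⟨hc1, hcM⟩, he⟩ := hs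
      have he' : e ≤ bmax := Nat.lt_succ_iff.mp he
      by_cases hac : a ≤ c
      · obtain ⟨p, hpb, hpe⟩ := hmin c d e
        rcases Nat.eq_zero_or_pos p with hp0 | hp0
        · -- minimizer is p = 0
          subst hp0
          have hQc : V c d e = ((c : ℝ) + 1 + w * d)
              + α * (lam * V (min (c + 1) δmax) d (min (e + 1) bmax)
                + (1 - lam) * V (min (c + 1) δmax) d e) := by
            rw [hpe]; simp [Qval]
          have hQa := hle a d e 0 (Nat.zero_le e)
          have hQa' : V a d e ≤ ((a : ℝ) + 1 + w * d)
              + α * (lam * V (min (a + 1) δmax) d (min (e + 1) bmax)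
                + (1 - lam) * V (min (a + 1) δmax) d e) := by
            simpa [Qval] using hQa
          have hmono : min (a + 1) δmax ≤ min (c + 1) δmax :=
            min_le_min (by omega) le_rfl
          have hmem : ∀ e', e' ≤ bmax →
              (min (a + 1) δmax, min (c + 1) δmax, e') ∈ T := by
            intro e' he''
            simp only [hT, Finset.mem_product, Finset.mem_Icc, Finset.mem_range]
            omega
          have hg1 : V (min (a + 1) δmax) d (min (e + 1) bmax)
              - V (min (c + 1) δmax) d (min (e + 1) bmax) ≤ max M 0 := by
            have := Finset.le_sup' g (hmem (min (e + 1) bmax) (min_le_right _ _))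
            rw [← hM] at this
            simpa [hg, if_pos hmono] using this.trans hMle
          have hg2 : V (min (a + 1) δmax) d e
              - V (min (c + 1) δmax) d e ≤ max M 0 := by
            have := Finset.le_sup' g (hmem e he')
            rw [← hM] at this
            simpa [hg, if_pos hmono] using this.trans hMle
          have hsum : lam * (V (min (a + 1) δmax) d (min (e + 1) bmax)
                - V (min (c + 1) δmax) d (min (e + 1) bmax))
              + (1 - lam) * (V (min (a + 1) δmax) d e
                - V (min (c + 1) δmax) d e) ≤ max M 0 := by
            have t1 := mul_le_mul_of_nonneg_left hg1 hl0.le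
            have t2 := mul_le_mul_of_nonneg_left hg2 h1l
            nlinarith
          have hαsum := mul_le_mul_of_nonneg_left hsum hα0.le
          have hacR : (a : ℝ) ≤ (c : ℝ) := by exact_mod_cast hac
          have : g (a, c, e) = V a d e - V c d e := by simp [hg, if_pos hac]
          rw [this]
          have hring : α * (lam * V (min (a + 1) δmax) d (min (e + 1) bmax)
                + (1 - lam) * V (min (a + 1) δmax) d e)
              - α * (lam * V (min (c + 1) δmax) d (min (e + 1) bmax)
                + (1 - lam) * V (min (c + 1) δmax) d e)
              = α * (lam * (V (min (a + 1) δmax) d (min (e + 1) bmax)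
                - V (min (c + 1) δmax) d (min (e + 1) bmax))
              + (1 - lam) * (V (min (a + 1) δmax) d e
                - V (min (c + 1) δmax) d e)) := by ring
          linarith [hαsum, hQa', hQc, hring]
        · -- minimizer is p > 0 : Q independent of δ
          have hp0' : p ≠ 0 := Nat.pos_iff_ne_zero.mp hp0
          have : V a d e ≤ V c d e := by
            have h1 := hle a d e p hpb
            have h2 : Qval α lam w σθ σob σch δmax bmax V a d e p
                = Qval α lam w σθ σob σch δmax bmax V c d e p := by
              simp [Qval, hp0']
            rw [h2, ← hpe] at h1
            exact h1
          have hge : g (a, c, e) = V a d e - V c d e := by simp [hg, if_pos hac]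
          rw [hge]
          have : V a d e - V c d e ≤ 0 := by linarith
          exact this.trans (by positivity)
      · have : g (a, c, e) = 0 := by simp [hg, hac]
        rw [this]; positivity
    have hMα : M ≤ α * max M 0 := by
      rw [hM]; exact Finset.sup'_le _ _ hkey
    have hM0 : M ≤ 0 := by
      by_contra h
      push_neg at h
      rw [max_eq_left h.le] at hMα
      nlinarith
    have hmem : (δ₁, δ₂, b) ∈ T := by
      simp only [hT, Finset.mem_product, Finset.mem_Icc, Finset.mem_range]
      omega
    have := Finset.le_sup' g hmem
    rw [← hM] at this
    have hgv : g (δ₁, δ₂, b) = V δ₁ d b - V δ₂ d b := by simp [hg, if_pos h12]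
    rw [hgv] at this
    linarith
  · -- monotone in d
    intro δ d₁ d₂ b h1 hmaxδ hb hd
    classical
    set T : Finset (ℕ × ℕ) := Finset.Icc 1 δmax ×ˢ Finset.range (bmax + 1) with hT
    have hTne : T.Nonempty := ⟨(1, 0), by simp [hT, hδmax]⟩
    set g : ℕ × ℕ → ℝ := fun s => V s.1 d₁ s.2 - V s.1 d₂ s.2 with hg
    set M := T.sup' hTne g with hM
    have hK0 : (0:ℝ) ≤ max M 0 := le_max_right _ _
    have hMle : M ≤ max M 0 := le_max_left _ _
    have hkey : ∀ s ∈ T, g s ≤ α * max M 0 := by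
      rintro ⟨a, e⟩ hs
      simp only [hT, Finset.mem_product, Finset.mem_Icc, Finset.mem_range] at hs
      obtain ⟨⟨ha1, haM⟩, he⟩ := hs
      have he' : e ≤ bmax := Nat.lt_succ_iff.mp he
      obtain ⟨p, hpb, hpe⟩ := hmin a d₂ e
      rcases Nat.eq_zero_or_pos p with hp0 | hp0
      · subst hp0
        have hQc : V a d₂ e = ((a : ℝ) + 1 + w * d₂)
            + α * (lam * V (min (a + 1) δmax) d₂ (min (e + 1) bmax)
              + (1 - lam) * V (min (a + 1) δmax) d₂ e) := by
          rw [hpe]; simp [Qval]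
        have hQa' : V a d₁ e ≤ ((a : ℝ) + 1 + w * d₁)
            + α * (lam * V (min (a + 1) δmax) d₁ (min (e + 1) bmax)
              + (1 - lam) * V (min (a + 1) δmax) d₁ e) := by
          simpa [Qval] using hle a d₁ e 0 (Nat.zero_le e)
        have hmem : ∀ e', e' ≤ bmax → (min (a + 1) δmax, e') ∈ T := by
          intro e' he''
          simp only [hT, Finset.mem_product, Finset.mem_Icc, Finset.mem_range]
          omega
        have hg1 : V (min (a + 1) δmax) d₁ (min (e + 1) bmax)
            - V (min (a + 1) δmax) d₂ (min (e + 1) bmax) ≤ max M 0 := by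
          have := Finset.le_sup' g (hmem (min (e + 1) bmax) (min_le_right _ _))
          rw [← hM] at this
          simpa [hg] using this.trans hMle
        have hg2 : V (min (a + 1) δmax) d₁ e
            - V (min (a + 1) δmax) d₂ e ≤ max M 0 := by
          have := Finset.le_sup' g (hmem e he')
          rw [← hM] at this
          simpa [hg] using this.trans hMle
        have hsum : lam * (V (min (a + 1) δmax) d₁ (min (e + 1) bmax)
              - V (min (a + 1) δmax) d₂ (min (e + 1) bmax))
            + (1 - lam) * (V (min (a + 1) δmax) d₁ e
              - V (min (a + 1) δmax) d₂ e) ≤ max M 0 := by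
          have t1 := mul_le_mul_of_nonneg_left hg1 hl0.le
          have t2 := mul_le_mul_of_nonneg_left hg2 h1l
          have hkeq : lam * max M 0 + (1 - lam) * max M 0 = max M 0 := by ring
          linarith
        have hαsum := mul_le_mul_of_nonneg_left hsum hα0.le
        have hwd : w * d₁ ≤ w * d₂ := mul_le_mul_of_nonneg_left hd hw.le
        have hge : g (a, e) = V a d₁ e - V a d₂ e := by simp [hg]
        rw [hge]
        have hring : α * (lam * V (min (a + 1) δmax) d₁ (min (e + 1) bmax)
              + (1 - lam) * V (min (a + 1) δmax) d₁ e)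
            - α * (lam * V (min (a + 1) δmax) d₂ (min (e + 1) bmax)
              + (1 - lam) * V (min (a + 1) δmax) d₂ e)
            = α * (lam * (V (min (a + 1) δmax) d₁ (min (e + 1) bmax)
              - V (min (a + 1) δmax) d₂ (min (e + 1) bmax))
            + (1 - lam) * (V (min (a + 1) δmax) d₁ e
              - V (min (a + 1) δmax) d₂ e)) := by ring
        linarith [hαsum, hQa', hQc, hwd, hring]
      · have hp0' : p ≠ 0 := Nat.pos_iff_ne_zero.mp hp0
        have hV' : V a d₁ e ≤ V a d₂ e := by
          have h1 := hle a d₁ e p hpb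
          have h2 : Qval α lam w σθ σob σch δmax bmax V a d₁ e p
              = Qval α lam w σθ σob σch δmax bmax V a d₂ e p := by
            simp [Qval, hp0']
          rw [h2, ← hpe] at h1
          exact h1
        have hge : g (a, e) = V a d₁ e - V a d₂ e := by simp [hg]
        rw [hge]
        have : V a d₁ e - V a d₂ e ≤ 0 := by linarith
        exact this.trans (by positivity)
    have hMα : M ≤ α * max M 0 := by
      rw [hM]; exact Finset.sup'_le _ _ hkey
    have hM0 : M ≤ 0 := by
      by_contra h
      push_neg at h
      rw [max_eq_left h.le] at hMα
      nlinarith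
    have hmem : (δ, b) ∈ T := by
      simp only [hT, Finset.mem_product, Finset.mem_Icc, Finset.mem_range]
      omega
    have := Finset.le_sup' g hmem
    rw [← hM] at this
    have hgv : g (δ, b) = V δ d₁ b - V δ d₂ b := by simp [hg]
    rw [hgv] at this
    linarith
end

section
/- In the AoI-distortion MDP, if a positive transmit power p > 0 is α-optimal at state (δ, d, b), then p is also α-optimal at state (δ', d, b) for any δ' > δ; symmetrically, if p = 0 is optimal at (δ, d, b), then 0 is optimal at (δ', d, b) for any δ' < δ. Hence for fixed d and b the optimal action has threshold structure in δ. -/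
/-- `p` is an α-optimal action at state `(δ, d, b)`: it is feasible (`p ≤ b`) and
minimizes the state-action value `Q` over all feasible actions. -/
def IsOptimalAction (α lam w σθ σob σch : ℝ) (δmax bmax : ℕ)
    (V : ℕ → ℝ → ℕ → ℝ) (δ : ℕ) (d : ℝ) (b : ℕ) (p : ℕ) : Prop :=
  p ≤ b ∧ ∀ q : ℕ, q ≤ b →
    Qval α lam w σθ σob σch δmax bmax V δ d b p
      ≤ Qval α lam w σθ σob σch δmax bmax V δ d b q

lemma qval_mono_aux (α lam w σθ σob σch : ℝ) (δmax bmax : ℕ) (V : ℕ → ℝ → ℕ → ℝ)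
    (hα : 0 ≤ α) (hl0 : 0 ≤ lam) (hl1 : lam ≤ 1)
    {δ δ' : ℕ} (hδ : δ ≤ δ') (d : ℝ) (b q : ℕ)
    (h1 : V (min (δ+1) δmax) d (min (b+1) bmax) ≤ V (min (δ'+1) δmax) d (min (b+1) bmax))
    (h2 : V (min (δ+1) δmax) d b ≤ V (min (δ'+1) δmax) d b) :
    Qval α lam w σθ σob σch δmax bmax V δ d b q
      ≤ Qval α lam w σθ σob σch δmax bmax V δ' d b q := by
  unfold Qval
  by_cases hq : q = 0
  · simp only [hq, if_true, eq_self_iff_true]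
    have hc : (δ : ℝ) ≤ (δ' : ℝ) := by exact_mod_cast hδ
    have := mul_le_mul_of_nonneg_left h1 hl0
    have := mul_le_mul_of_nonneg_left h2 (by linarith : (0:ℝ) ≤ 1 - lam)
    nlinarith
  · simp [hq]

lemma V_mono (α lam w σθ σob σch : ℝ) (δmax bmax : ℕ) (V : ℕ → ℝ → ℕ → ℝ)
    (hα : 0 ≤ α) (hl0 : 0 ≤ lam) (hl1 : lam ≤ 1)
    (hV : IsBellmanFixedPoint α lam w σθ σob σch δmax bmax V) :
    ∀ n δ δ' : ℕ, ∀ d : ℝ, ∀ b : ℕ, δ ≤ δ' → δmax ≤ δ + n → V δ d b ≤ V δ' d b := by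
  intro n
  induction n with
  | zero =>
    intro δ δ' d b hδ hcap
    have e1 : min (δ+1) δmax = δmax := by omega
    have e2 : min (δ'+1) δmax = δmax := by omega
    rw [hV δ d b, hV δ' d b]
    apply Finset.le_inf'
    intro q hq
    refine le_trans (Finset.inf'_le _ hq) ?_
    exact qval_mono_aux α lam w σθ σob σch δmax bmax V hα hl0 hl1 hδ d b q
      (by rw [e1, e2]) (by rw [e1, e2])
  | succ n ih =>
    intro δ δ' d b hδ hcap
    have hm : min (δ+1) δmax ≤ min (δ'+1) δmax := by omega
    have hc : δmax ≤ min (δ+1) δmax + n := by omega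
    rw [hV δ d b, hV δ' d b]
    apply Finset.le_inf'
    intro q hq
    refine le_trans (Finset.inf'_le _ hq) ?_
    exact qval_mono_aux α lam w σθ σob σch δmax bmax V hα hl0 hl1 hδ d b q
      (ih _ _ d _ hm hc) (ih _ _ d _ hm hc)

/-- In the AoI-distortion MDP, if a positive transmit power `p > 0` is
α-optimal at `(δ, d, b)`, then `p` is also α-optimal at `(δ', d, b)` for any
`δ' > δ`; symmetrically, if `p = 0` is optimal at `(δ, d, b)`, then `0` is optimal at
`(δ', d, b)` for any `δ' < δ`.  Hence for fixed `d` and `b` the optimal action has a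
threshold structure in the AoI `δ`. -/
theorem optimal_power_threshold_in_aoi
    (α lam w σθ σob σch : ℝ) (δmax bmax : ℕ) (V : ℕ → ℝ → ℕ → ℝ)
    (hα0 : 0 < α) (hα1 : α < 1) (hl0 : 0 < lam) (hl1 : lam < 1) (hw : 0 < w)
    (hob : 0 ≤ σob) (hθob : σob < σθ) (hch : 0 < σch)
    (hδmax : 1 ≤ δmax)
    (hV : IsBellmanFixedPoint α lam w σθ σob σch δmax bmax V) :
    (∀ δ δ' : ℕ, ∀ d : ℝ, ∀ b p : ℕ,
       1 ≤ δ → δ < δ' → δ' ≤ δmax → b ≤ bmax → 0 < p →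
       IsOptimalAction α lam w σθ σob σch δmax bmax V δ d b p →
       IsOptimalAction α lam w σθ σob σch δmax bmax V δ' d b p) ∧
    (∀ δ δ' : ℕ, ∀ d : ℝ, ∀ b : ℕ,
       1 ≤ δ' → δ' < δ → δ ≤ δmax → b ≤ bmax →
       IsOptimalAction α lam w σθ σob σch δmax bmax V δ d b 0 →
       IsOptimalAction α lam w σθ σob σch δmax bmax V δ' d b 0) := by
  have hα := hα0.le
  have hl0' := hl0.le
  have hl1' := hl1.le
  have hVmono : ∀ δ δ' : ℕ, ∀ d : ℝ, ∀ b : ℕ, δ ≤ δ' → V δ d b ≤ V δ' d b := by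
    intro δ δ' d b hδ
    exact V_mono α lam w σθ σob σch δmax bmax V hα hl0' hl1' hV δmax δ δ' d b hδ (by omega)
  have key : ∀ δ δ' : ℕ, δ ≤ δ' → ∀ d : ℝ, ∀ b q : ℕ,
      Qval α lam w σθ σob σch δmax bmax V δ d b q
        ≤ Qval α lam w σθ σob σch δmax bmax V δ' d b q := by
    intro δ δ' hδ d b q
    exact qval_mono_aux α lam w σθ σob σch δmax bmax V hα hl0' hl1' hδ d b q
      (hVmono _ _ _ _ (by omega)) (hVmono _ _ _ _ (by omega))
  have qpos : ∀ δ δ' : ℕ, ∀ d : ℝ, ∀ b q : ℕ, q ≠ 0 →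
      Qval α lam w σθ σob σch δmax bmax V δ d b q
        = Qval α lam w σθ σob σch δmax bmax V δ' d b q := by
    intro δ δ' d b q hq
    simp [Qval, hq]
  constructor
  · rintro δ δ' d b p _ hδδ' _ _ hp ⟨hpb, hopt⟩
    refine ⟨hpb, fun q hq => ?_⟩
    rcases Nat.eq_zero_or_pos q with rfl | hq0
    · calc Qval α lam w σθ σob σch δmax bmax V δ' d b p
          = Qval α lam w σθ σob σch δmax bmax V δ d b p := qpos _ _ _ _ _ hp.ne'
        _ ≤ Qval α lam w σθ σob σch δmax bmax V δ d b 0 := hopt 0 (Nat.zero_le b)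
        _ ≤ Qval α lam w σθ σob σch δmax bmax V δ' d b 0 := key δ δ' hδδ'.le d b 0
    · calc Qval α lam w σθ σob σch δmax bmax V δ' d b p
          = Qval α lam w σθ σob σch δmax bmax V δ d b p := qpos _ _ _ _ _ hp.ne'
        _ ≤ Qval α lam w σθ σob σch δmax bmax V δ d b q := hopt q hq
        _ = Qval α lam w σθ σob σch δmax bmax V δ' d b q := qpos _ _ _ _ _ hq0.ne'
  · rintro δ δ' d b _ hδ'δ _ _ ⟨_, hopt⟩
    refine ⟨Nat.zero_le b, fun q hq => ?_⟩
    rcases Nat.eq_zero_or_pos q with rfl | hq0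
    · exact le_refl _
    · calc Qval α lam w σθ σob σch δmax bmax V δ' d b 0
          ≤ Qval α lam w σθ σob σch δmax bmax V δ d b 0 := key δ' δ hδ'δ.le d b 0
        _ ≤ Qval α lam w σθ σob σch δmax bmax V δ d b q := hopt q hq
        _ = Qval α lam w σθ σob σch δmax bmax V δ' d b q := qpos _ _ _ _ _ hq0.ne'
end
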